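/- Suppose S contains a point x₀ > 0 (so that P_Y(k) > 0 for all k ∈ ℕ), and let i(x) = D(x) for x > 0. Then i is twice differentiable on (0, ∞) and for every x > 0, i″(x) = Σ_{k∈ℕ} P_{Y|X}(k|x) · log(1/m(k+1)) − i′(x) + log x + 1/x, where m(k) = (k+1)·P_Y(k+1)/P_Y(k) is the posterior mean of the input given output k. -/

import Mathlib

/-!
For `x > 0` and `c k = log (k! P_Y(k))` one has `P(k|x) log (P(k|x) / P_Y(k)) =
P(k|x) (k log x - x - c k)`, so `i(x) = x log x - x - e^{-x} F(x)` with `F(x) = Σ c k x^k / k!`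
the exponential generating function of `c`. As `p(x₀) x₀^k e^{-x₀} ≤ k! P_Y(k) ≤ A^k`, the
sequence `c` grows at most linearly, hence `F` and its shifts are entire and differentiate
termwise, `F' = Σ c (k+1) x^k / k!`. Differentiating twice gives the formula, because
`log (1 / m(k+1)) = c (k+1) - c (k+2)`.
-/

open Real

/-- Poisson channel pmf: `P_{Y|X}(y|x) = x^y e^{-x} / y!` (with `0^0 = 1`, `0! = 1`). -/
noncomputable def poissonPMF (x : ℝ) (y : ℕ) : ℝ := x ^ y * Real.exp (-x) / (Nat.factorial y)

/-- Output pmf induced by a finitely supported input: `P_Y(k) = Σ_{x ∈ S} p(x) x^k e^{-x}/k!`. -/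
noncomputable def outPMF (S : Finset ℝ) (p : ℝ → ℝ) (k : ℕ) : ℝ :=
  ∑ x ∈ S, p x * poissonPMF x k

/-- Relative entropy `i(x) = D(x) = Σ_k P_{Y|X}(k|x) log (P_{Y|X}(k|x) / P_Y(k))`. -/
noncomputable def relEnt (S : Finset ℝ) (p : ℝ → ℝ) (x : ℝ) : ℝ :=
  ∑' k : ℕ, poissonPMF x k * Real.log (poissonPMF x k / outPMF S p k)

/-- Posterior mean of the input given output `k`: `m(k) = (k+1) P_Y(k+1) / P_Y(k)`. -/
noncomputable def postMean (S : Finset ℝ) (p : ℝ → ℝ) (k : ℕ) : ℝ :=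
  ((k : ℝ) + 1) * outPMF S p (k + 1) / outPMF S p k

open scoped Nat

noncomputable def expGenFun (a : ℕ → ℝ) (x : ℝ) : ℝ := ∑' k, a k * x ^ k / k !

section ExpGenFun

variable {a b : ℕ → ℝ} {C R : ℝ}

lemma abs_succ_le_mul_pow (ha : ∀ k, |a k| ≤ C * R ^ k) (k : ℕ) :
    |a (k + 1)| ≤ C * R * R ^ k := by
  have h := ha (k + 1)
  rwa [pow_succ', ← mul_assoc] at h

lemma norm_mul_pow_div_factorial_le (ha : ∀ k, |a k| ≤ C * R ^ k) {t r : ℝ} (htr : |t| ≤ r)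
    (k : ℕ) : ‖a k * t ^ k / (k ! : ℝ)‖ ≤ C * ((R * r) ^ k / k !) := by
  rw [Real.norm_eq_abs, abs_div, abs_mul, abs_pow, Nat.abs_cast, mul_pow, ← mul_div_assoc,
    ← mul_assoc]
  refine div_le_div_of_nonneg_right ?_ (Nat.cast_nonneg _)
  exact mul_le_mul (ha k) (pow_le_pow_left₀ (abs_nonneg t) htr k) (by positivity)
    ((abs_nonneg _).trans (ha k))

lemma summable_expGenFun (ha : ∀ k, |a k| ≤ C * R ^ k) (x : ℝ) :
    Summable fun k ↦ a k * x ^ k / k ! :=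
  .of_norm_bounded ((Real.summable_pow_div_factorial _).mul_left C)
    (norm_mul_pow_div_factorial_le ha le_rfl)

lemma expGenFun_sub {x : ℝ} (ha : Summable fun k ↦ a k * x ^ k / k !)
    (hb : Summable fun k ↦ b k * x ^ k / k !) :
    expGenFun (fun k ↦ a k - b k) x = expGenFun a x - expGenFun b x := by
  rw [expGenFun, expGenFun, expGenFun, ← ha.tsum_sub hb]
  simp only [sub_mul, sub_div]

lemma hasDerivAt_expGenFun (ha : ∀ k, |a k| ≤ C * R ^ k) (x : ℝ) :
    HasDerivAt (expGenFun a) (expGenFun (fun k ↦ a (k + 1)) x) x := by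
  -- splitting off `a 0` makes each summand's derivative a summand of the shifted series
  have hsplit : expGenFun a = fun t ↦ a 0 + ∑' k, a (k + 1) * t ^ (k + 1) / (k + 1)! := by
    funext t
    rw [expGenFun, (summable_expGenFun ha t).tsum_eq_zero_add]
    simp
  have hterm (k : ℕ) (t : ℝ) :
      HasDerivAt (fun t ↦ a (k + 1) * t ^ (k + 1) / (k + 1)!) (a (k + 1) * t ^ k / k !) t := by
    refine (((hasDerivAt_pow (k + 1) t).const_mul (a (k + 1))).div_const _).congr_deriv ?_
    rw [Nat.factorial_succ]
    push_cast
    field_simp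
  have hx : x ∈ Metric.ball (0 : ℝ) (|x| + 1) := by simp
  rw [hsplit]
  refine HasDerivAt.const_add _ (hasDerivAt_tsum_of_isPreconnected
    ((Real.summable_pow_div_factorial (R * (|x| + 1))).mul_left (C * R)) Metric.isOpen_ball
    (convex_ball _ _).isPreconnected (fun k t _ ↦ hterm k t) (fun k t ht ↦ ?_) hx
    ((summable_nat_add_iff 1).mpr (summable_expGenFun ha x)) hx)
  rw [mem_ball_zero_iff, Real.norm_eq_abs] at ht
  exact norm_mul_pow_div_factorial_le (abs_succ_le_mul_pow ha) ht.le k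

end ExpGenFun

lemma poissonPMF_eq_exp_neg_mul (x : ℝ) (k : ℕ) :
    poissonPMF x k = Real.exp (-x) * (x ^ k / k !) := by
  rw [poissonPMF]
  ring

lemma tsum_poissonPMF_mul (w : ℕ → ℝ) (x : ℝ) :
    ∑' k, poissonPMF x k * w k = Real.exp (-x) * expGenFun w x := by
  rw [expGenFun, ← tsum_mul_left]
  congr 1 with k
  rw [poissonPMF_eq_exp_neg_mul]
  ring

lemma hasSum_poissonPMF (x : ℝ) : HasSum (poissonPMF x) 1 := by
  have h := (NormedSpace.expSeries_div_hasSum_exp x).mul_left (Real.exp (-x))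
  rwa [← Real.exp_eq_exp_ℝ, ← Real.exp_add, neg_add_cancel, Real.exp_zero,
    ← funext (poissonPMF_eq_exp_neg_mul x)] at h

lemma hasSum_nat_mul_poissonPMF (x : ℝ) : HasSum (fun k : ℕ ↦ k * poissonPMF x k) x := by
  have h := (hasSum_nat_add_iff (f := fun k : ℕ ↦ k * poissonPMF x k) 1).mp <|
    ((hasSum_poissonPMF x).mul_left x).congr_fun fun k ↦ by
      simp only [poissonPMF, Nat.factorial_succ]
      push_cast
      field_simp
      ring
  simpa using h

lemma log_poissonPMF {x : ℝ} (hx : 0 < x) (k : ℕ) :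
    Real.log (poissonPMF x k) = k * Real.log x - x - Real.log k ! := by
  rw [poissonPMF, Real.log_div (by positivity) (by positivity),
    Real.log_mul (by positivity) (Real.exp_pos _).ne', Real.log_pow, Real.log_exp]
  ring

noncomputable def logFactorialMulOutPMF (S : Finset ℝ) (p : ℝ → ℝ) (k : ℕ) : ℝ :=
  Real.log (k ! * outPMF S p k)

lemma factorial_mul_outPMF (S : Finset ℝ) (p : ℝ → ℝ) (k : ℕ) :
    k ! * outPMF S p k = ∑ a ∈ S, p a * (a ^ k * Real.exp (-a)) := by
  rw [outPMF, Finset.mul_sum]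
  refine Finset.sum_congr rfl fun a _ ↦ ?_
  rw [poissonPMF]
  field_simp

section OutPMF

variable {S : Finset ℝ} {p : ℝ → ℝ}

lemma le_factorial_mul_outPMF (hS : ∀ a ∈ S, 0 ≤ a) (hp : ∀ a ∈ S, 0 ≤ p a) {x₀ : ℝ}
    (hx₀ : x₀ ∈ S) (k : ℕ) : p x₀ * (x₀ ^ k * Real.exp (-x₀)) ≤ k ! * outPMF S p k := by
  rw [factorial_mul_outPMF]
  exact Finset.single_le_sum (f := fun a ↦ p a * (a ^ k * Real.exp (-a)))
    (fun a ha ↦ mul_nonneg (hp a ha) (by have := hS a ha; positivity)) hx₀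

lemma factorial_mul_outPMF_le {A : ℝ} (hS : (S : Set ℝ) ⊆ Set.Icc 0 A) (hp : ∀ a ∈ S, 0 ≤ p a)
    (hpsum : ∑ a ∈ S, p a = 1) (k : ℕ) : k ! * outPMF S p k ≤ A ^ k := by
  calc k ! * outPMF S p k = ∑ a ∈ S, p a * (a ^ k * Real.exp (-a)) := factorial_mul_outPMF S p k
    _ ≤ ∑ a ∈ S, p a * A ^ k := by
      refine Finset.sum_le_sum fun a ha ↦ mul_le_mul_of_nonneg_left ?_ (hp a ha)
      obtain ⟨h0, hA⟩ := hS ha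
      calc a ^ k * Real.exp (-a) ≤ a ^ k * 1 := by gcongr; simpa using h0
        _ ≤ A ^ k := by rw [mul_one]; gcongr
    _ = A ^ k := by rw [← Finset.sum_mul, hpsum, one_mul]

lemma outPMF_pos (hS : ∀ a ∈ S, 0 ≤ a) (hp : ∀ a ∈ S, 0 < p a) {x₀ : ℝ} (hx₀ : x₀ ∈ S)
    (hx₀pos : 0 < x₀) (k : ℕ) : 0 < outPMF S p k := by
  have h := (le_factorial_mul_outPMF hS (fun a ha ↦ (hp a ha).le) hx₀ k).trans_lt'
    (by have := hp x₀ hx₀; positivity)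
  exact pos_of_mul_pos_right h (by positivity)

lemma exists_abs_logFactorialMulOutPMF_le {A : ℝ} (hS : (S : Set ℝ) ⊆ Set.Icc 0 A)
    (hp : ∀ a ∈ S, 0 < p a) (hpsum : ∑ a ∈ S, p a = 1) {x₀ : ℝ} (hx₀ : x₀ ∈ S)
    (hx₀pos : 0 < x₀) : ∃ C R : ℝ, ∀ k, |logFactorialMulOutPMF S p k| ≤ C * R ^ k := by
  set α := |Real.log (p x₀)| + x₀
  set β := |Real.log A| + |Real.log x₀|
  refine ⟨Real.exp α, Real.exp β, fun k ↦ ?_⟩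
  have hS₀ : ∀ a ∈ S, 0 ≤ a := fun a ha ↦ (hS ha).1
  have hlow := le_factorial_mul_outPMF hS₀ (fun a ha ↦ (hp a ha).le) hx₀ k
  have hpx₀ := hp x₀ hx₀
  have hupper : logFactorialMulOutPMF S p k ≤ k * Real.log A := by
    rw [← Real.log_pow]
    exact Real.log_le_log (mul_pos (by positivity) (outPMF_pos hS₀ hp hx₀ hx₀pos k))
      (factorial_mul_outPMF_le hS (fun a ha ↦ (hp a ha).le) hpsum k)
  have hlower : Real.log (p x₀) + (k * Real.log x₀ - x₀) ≤ logFactorialMulOutPMF S p k := by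
    have := Real.log_le_log (by positivity) hlow
    rwa [Real.log_mul hpx₀.ne' (by positivity), Real.log_mul (by positivity) (by positivity),
      Real.log_pow, Real.log_exp, ← sub_eq_add_neg] at this
  have hlin : |logFactorialMulOutPMF S p k| ≤ α + β * k := by
    have hk : (0 : ℝ) ≤ k := k.cast_nonneg
    rw [abs_le]
    constructor
    · nlinarith [neg_abs_le (Real.log (p x₀)), neg_abs_le (Real.log x₀), abs_nonneg (Real.log A)]
    · nlinarith [le_abs_self (Real.log A), abs_nonneg (Real.log (p x₀)), abs_nonneg (Real.log x₀)]
  calc |logFactorialMulOutPMF S p k| ≤ α + β * k := hlin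
    _ ≤ Real.exp (α + β * k) := by linarith [Real.add_one_le_exp (α + β * k)]
    _ = Real.exp α * Real.exp β ^ k := by rw [Real.exp_add, ← Real.exp_nat_mul, mul_comm β]

end OutPMF

section RelEnt

variable {S : Finset ℝ} {p : ℝ → ℝ} {C R : ℝ}

local notation "c" => logFactorialMulOutPMF S p

lemma log_one_div_postMean (hpos : ∀ k, 0 < outPMF S p k) (k : ℕ) :
    Real.log (1 / postMean S p k) = c k - c (k + 1) := by
  have hpk := hpos k
  have hpk' := hpos (k + 1)
  have h : 1 / postMean S p k = (k ! * outPMF S p k) / ((k + 1)! * outPMF S p (k + 1)) := by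
    rw [postMean, Nat.factorial_succ]
    push_cast
    field_simp
  rw [h, Real.log_div (by positivity) (by positivity), logFactorialMulOutPMF,
    logFactorialMulOutPMF]

lemma relEnt_eq (hpos : ∀ k, 0 < outPMF S p k) (hc : ∀ k, |c k| ≤ C * R ^ k) {x : ℝ}
    (hx : 0 < x) :
    relEnt S p x = x * Real.log x - x - Real.exp (-x) * expGenFun c x := by
  have hterm (k : ℕ) : poissonPMF x k * Real.log (poissonPMF x k / outPMF S p k)
      = k * poissonPMF x k * Real.log x - x * poissonPMF x k - poissonPMF x k * c k := by
    rw [Real.log_div (by unfold poissonPMF; positivity) (hpos k).ne', log_poissonPMF hx,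
      logFactorialMulOutPMF, Real.log_mul (by positivity) (hpos k).ne']
    ring
  have hc_sum : HasSum (fun k ↦ poissonPMF x k * c k) (Real.exp (-x) * expGenFun c x) := by
    rw [← tsum_poissonPMF_mul]
    refine Summable.hasSum <| ((summable_expGenFun hc x).mul_left (Real.exp (-x))).congr fun k ↦ ?_
    rw [poissonPMF_eq_exp_neg_mul]
    ring
  have h := (((hasSum_nat_mul_poissonPMF x).mul_right (Real.log x)).sub
    ((hasSum_poissonPMF x).mul_left x)).sub hc_sum
  rw [relEnt, tsum_congr hterm, h.tsum_eq, mul_one]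

lemma tsum_poissonPMF_mul_log_one_div_postMean (hpos : ∀ k, 0 < outPMF S p k)
    (hc : ∀ k, |c k| ≤ C * R ^ k) (x : ℝ) :
    ∑' k, poissonPMF x k * Real.log (1 / postMean S p (k + 1)) =
      Real.exp (-x) * (expGenFun (fun k ↦ c (k + 1)) x - expGenFun (fun k ↦ c (k + 2)) x) := by
  have hc₁ := abs_succ_le_mul_pow hc
  simp_rw [tsum_poissonPMF_mul, log_one_div_postMean hpos]
  rw [expGenFun_sub (summable_expGenFun hc₁ x) (summable_expGenFun (abs_succ_le_mul_pow hc₁) x)]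

lemma hasDerivAt_relEnt (hpos : ∀ k, 0 < outPMF S p k) (hc : ∀ k, |c k| ≤ C * R ^ k) {x : ℝ}
    (hx : 0 < x) :
    HasDerivAt (relEnt S p)
      (Real.log x - Real.exp (-x) * (expGenFun (fun k ↦ c (k + 1)) x - expGenFun c x)) x := by
  have hloc : relEnt S p =ᶠ[nhds x] fun t ↦ t * Real.log t - t - Real.exp (-t) * expGenFun c t :=
    Filter.eventually_of_mem (Ioi_mem_nhds hx) fun t ht ↦ relEnt_eq hpos hc ht
  refine (((Real.hasDerivAt_mul_log hx.ne').sub (hasDerivAt_id x)).sub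
    ((hasDerivAt_neg x).exp.mul (hasDerivAt_expGenFun hc x))
    |>.congr_of_eventuallyEq hloc).congr_deriv ?_
  ring

lemma hasDerivAt_deriv_relEnt (hpos : ∀ k, 0 < outPMF S p k) (hc : ∀ k, |c k| ≤ C * R ^ k)
    {x : ℝ} (hx : 0 < x) :
    HasDerivAt (deriv (relEnt S p))
      (x⁻¹ + Real.exp (-x) * (expGenFun (fun k ↦ c (k + 1)) x - expGenFun c x)
        - Real.exp (-x) * (expGenFun (fun k ↦ c (k + 2)) x - expGenFun (fun k ↦ c (k + 1)) x))
      x := by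
  have hloc : deriv (relEnt S p) =ᶠ[nhds x] fun t ↦
      Real.log t - Real.exp (-t) * (expGenFun (fun k ↦ c (k + 1)) t - expGenFun c t) :=
    Filter.eventually_of_mem (Ioi_mem_nhds hx) fun t ht ↦ (hasDerivAt_relEnt hpos hc ht).deriv
  refine (((Real.hasDerivAt_log hx.ne').sub ((hasDerivAt_neg x).exp.mul
    ((hasDerivAt_expGenFun (abs_succ_le_mul_pow hc) x).sub (hasDerivAt_expGenFun hc x))))
    |>.congr_of_eventuallyEq hloc).congr_deriv ?_
  rw [Pi.sub_apply]
  ring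

end RelEnt

theorem relEnt_second_derivative_general
    (A : ℝ) (S : Finset ℝ) (hS : (S : Set ℝ) ⊆ Set.Icc 0 A)
    (p : ℝ → ℝ) (hp : ∀ x ∈ S, 0 < p x) (hpsum : ∑ x ∈ S, p x = 1)
    (x₀ : ℝ) (hx₀S : x₀ ∈ S) (hx₀pos : 0 < x₀) :
    ∀ x : ℝ, 0 < x →
      DifferentiableAt ℝ (relEnt S p) x ∧
      DifferentiableAt ℝ (deriv (relEnt S p)) x ∧
      deriv (deriv (relEnt S p)) x =
        (∑' k : ℕ, poissonPMF x k * Real.log (1 / postMean S p (k + 1))) -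
          deriv (relEnt S p) x + Real.log x + 1 / x := by
  intro x hx
  have hpos := outPMF_pos (fun a ha ↦ (hS ha).1) hp hx₀S hx₀pos
  obtain ⟨C, R, hc⟩ := exists_abs_logFactorialMulOutPMF_le hS hp hpsum hx₀S hx₀pos
  have h₁ := hasDerivAt_relEnt hpos hc hx
  have h₂ := hasDerivAt_deriv_relEnt hpos hc hx
  refine ⟨h₁.differentiableAt, h₂.differentiableAt, ?_⟩
  rw [h₂.deriv, h₁.deriv, tsum_poissonPMF_mul_log_one_div_postMean hpos hc]
  ring

/-- `i = D` is twice differentiable on `(0, ∞)` with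
`i''(x) = Σ_k P_{Y|X}(k|x) log (1/m(k+1)) − i'(x) + log x + 1/x`. -/
theorem relEnt_second_derivative
    (A : ℝ) (hA : 0 < A) (S : Finset ℝ) (hS : (S : Set ℝ) ⊆ Set.Icc 0 A)
    (p : ℝ → ℝ) (hp : ∀ x ∈ S, 0 < p x) (hpsum : ∑ x ∈ S, p x = 1)
    (x₀ : ℝ) (hx₀S : x₀ ∈ S) (hx₀pos : 0 < x₀) :
    ∀ x : ℝ, 0 < x →
      DifferentiableAt ℝ (relEnt S p) x ∧
      DifferentiableAt ℝ (deriv (relEnt S p)) x ∧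
      deriv (deriv (relEnt S p)) x =
        (∑' k : ℕ, poissonPMF x k * Real.log (1 / postMean S p (k + 1))) -
          deriv (relEnt S p) x + Real.log x + 1 / x :=
  relEnt_second_derivative_general A S hS p hp hpsum x₀ hx₀S hx₀pos
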